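/- arXiv:1211.2301 — 2 statements merged into one kernel-verified Lean document; each statement's English description precedes it below -/
import Mathlib

section
/- Let e be a transitive relation on a set E. Every regular closed subset a of e satisfies a = cl(⋃{⟨c,d,U⟩ : (c,d,U) ∈ F(e) and ⟨c,d,U⟩ ⊆ a}); in particular, the complete lattice Reg(e) is spatial: every element of Reg(e) is the join of the completely join-irreducible elements below it. -/
/-- A binary relation (as a set of pairs) is transitive. -/
def TransRel {E : Type*} (a : Set (E × E)) : Prop :=
  ∀ x y z : E, (x, y) ∈ a → (y, z) ∈ a → (x, z) ∈ a

/-- The transitive closure of a set of pairs. -/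
def tcl {E : Type*} (a : Set (E × E)) : Set (E × E) :=
  {p | Relation.TransGen (fun u v => (u, v) ∈ a) p.1 p.2}

/-- The interior of `a` relative to `e`. -/
def tint {E : Type*} (e a : Set (E × E)) : Set (E × E) :=
  e \ tcl (e \ a)

/-- `a` is a closed subset of `e`. -/
def IsClosedIn {E : Type*} (e a : Set (E × E)) : Prop :=
  a ⊆ e ∧ TransRel a

/-- `a` is an open subset of `e`. -/
def IsOpenIn {E : Type*} (e a : Set (E × E)) : Prop :=
  a ⊆ e ∧ TransRel (e \ a)

/-- `a` is a clopen subset of `e`. -/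
def IsClopenIn {E : Type*} (e a : Set (E × E)) : Prop :=
  a ⊆ e ∧ TransRel a ∧ TransRel (e \ a)

/-- `a` is a regular closed subset of `e`. -/
def RegClosed {E : Type*} (e a : Set (E × E)) : Prop :=
  a ⊆ e ∧ a = tcl (tint e a)

/-- The reflexive preordering `x ⊴ y` associated with `e`. -/
def rle {E : Type*} (e : Set (E × E)) (x y : E) : Prop :=
  (x, y) ∈ e ∨ x = y

/-- `x ≡ y`: `x ⊴ y` and `y ⊴ x`. -/
def eqv {E : Type*} (e : Set (E × E)) (x y : E) : Prop :=
  rle e x y ∧ rle e y x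

/-- `e` is square-free. -/
def SqFree {E : Type*} (e : Set (E × E)) : Prop :=
  ∀ a b x y : E, (a, b) ∈ e → rle e a x → rle e x b → rle e a y → rle e y b →
    rle e x y ∨ rle e y x

/-- The interval `[a,b] = {x | a ⊴ x ⊴ b}`. -/
def cce {E : Type*} (e : Set (E × E)) (a b : E) : Set E :=
  {x | rle e a x ∧ rle e x b}

/-- `(a,b,U) ∈ F(e)`. -/
def Ftriple {E : Type*} (e : Set (E × E)) (a b : E) (U : Set E) : Prop :=
  (a, b) ∈ e ∧ U ⊆ cce e a b ∧ (a ≠ b → a ∉ U ∧ b ∈ U)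

/-- The clopen set `⟨a,b,U⟩ = e ∩ (({a} ∪ Uᶜ) × ({b} ∪ U))`. -/
def pji {E : Type*} (e : Set (E × E)) (a b : E) (U : Set E) : Set (E × E) :=
  e ∩ ((({a} : Set E) ∪ (cce e a b \ U)) ×ˢ (({b} : Set E) ∪ U))

/-- The set `p₋` associated with `p = ⟨a,b,U⟩`: if `a ≠ b` it is
`p \ ([a] × [b])`, and if `a = b` it is `p \ {(a,a)}`. -/
def pminus {E : Type*} (e : Set (E × E)) (a b : E) (U : Set E) : Set (E × E) :=
  {z ∈ pji e a b U | ¬ ((a ≠ b ∧ eqv e z.1 a ∧ eqv e z.2 b) ∨ (a = b ∧ z = (a, a)))}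

/-! Each pair `(c, d)` in the interior of a regular closed `a` lies in a clopen `⟨c, d, U⟩ ⊆ a`,
where `U` consists of the points `x ≠ c` of `[c, d]` with `(c, x)` in the interior; as `a` is the
closure of its interior, these sets generate `a`. Each `p = ⟨c, d, U⟩` is completely
join-irreducible with lower cover the clopen `p₋`: no chain of length at least two inside `p`
joins a pair of `p \ p₋`, so a regular closed `x ⊆ p` containing such a pair contains it in its
interior, and then every pair of `p` lies in the interior of `x` as well, since otherwise it would
be connected to that pair through `e \ x`. -/

section Closure

variable {E : Type*} {e a t : Set (E × E)}

lemma subset_tcl (a : Set (E × E)) : a ⊆ tcl a :=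
  fun _ h => Relation.TransGen.single h

lemma transRel_tcl (a : Set (E × E)) : TransRel (tcl a) :=
  fun _ _ _ => Relation.TransGen.trans

lemma tcl_subset (h : a ⊆ t) (ht : TransRel t) : tcl a ⊆ t := by
  have : IsTrans E (fun u v => (u, v) ∈ t) := ⟨ht⟩
  exact fun z hz =>
    Relation.transGen_minimal (r' := fun u v => (u, v) ∈ t) (fun _ _ h' => h h') _ _ hz

lemma tcl_mono (h : a ⊆ t) : tcl a ⊆ tcl t :=
  fun _ hz => Relation.TransGen.mono (fun _ _ h' => h h') _ _ hz

lemma tcl_eq_self (ht : TransRel t) : tcl t = t :=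
  (tcl_subset subset_rfl ht).antisymm (subset_tcl t)

lemma tint_subset (e a : Set (E × E)) : tint e a ⊆ a :=
  fun _ ⟨hze, hz⟩ => by_contra fun hza => hz (subset_tcl _ ⟨hze, hza⟩)

lemma IsClopenIn.regClosed (hp : IsClopenIn e a) : RegClosed e a := by
  obtain ⟨hae, hclosed, hopen⟩ := hp
  have hint : tint e a = a := by
    rw [tint, tcl_eq_self hopen, Set.sdiff_sdiff_right_self,
      Set.inter_eq_self_of_subset_right hae]
  exact ⟨hae, by rw [hint, tcl_eq_self hclosed]⟩

lemma RegClosed.eq_tcl_sUnion {S : Set (Set (E × E))} (ha : RegClosed e a)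
    (hS : ∀ p ∈ S, p ⊆ a) (hcover : tint e a ⊆ ⋃₀ S) : a = tcl (⋃₀ S) := by
  have hclosed : TransRel a := ha.2 ▸ transRel_tcl _
  refine (ha.2.trans_subset (tcl_mono hcover)).antisymm ?_
  exact tcl_subset (Set.sUnion_subset hS) hclosed

lemma rle_refl (x : E) : rle e x x := Or.inr rfl

lemma rle_trans (he : TransRel e) {x y z : E} (hxy : rle e x y) (hyz : rle e y z) :
    rle e x z := by
  rcases hxy with hxy | rfl
  · rcases hyz with hyz | rfl
    exacts [Or.inl (he _ _ _ hxy hyz), Or.inl hxy]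
  · exact hyz

lemma TransRel.mem_of_rle_of_mem_of_rle (ht : TransRel t) {u x y v : E} (hux : rle t u x)
    (hxy : (x, y) ∈ t) (hyv : rle t y v) : (u, v) ∈ t := by
  have huy : (u, y) ∈ t := by
    rcases hux with hux | rfl
    exacts [ht _ _ _ hux hxy, hxy]
  rcases hyv with hyv | rfl
  exacts [ht _ _ _ huy hyv, huy]

end Closure

section Triple

variable {E : Type*} {e : Set (E × E)} {c d : E} {U : Set E}

lemma mem_pji {x y : E} :
    (x, y) ∈ pji e c d U ↔ (x, y) ∈ e ∧ (x = c ∨ x ∈ cce e c d \ U) ∧ (y = d ∨ y ∈ U) := by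
  simp [pji, Set.mem_prod]

lemma rle_of_source {x : E} (hx : x = c ∨ x ∈ cce e c d \ U) : rle e c x := by
  rcases hx with rfl | hx
  exacts [rle_refl x, hx.1.1]

lemma rle_of_target (hF : Ftriple e c d U) {y : E} (hy : y = d ∨ y ∈ U) : rle e y d := by
  rcases hy with rfl | hy
  exacts [rle_refl y, (hF.2.1 hy).2]

lemma eq_of_source_of_target (hF : Ftriple e c d U) {w : E} (hsrc : w = c ∨ w ∈ cce e c d \ U)
    (htgt : w = d ∨ w ∈ U) : c = d ∧ w = c := by
  by_cases hcd : c = d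
  · subst hcd
    rcases hsrc with rfl | ⟨-, hwU⟩
    · exact ⟨rfl, rfl⟩
    · exact ⟨rfl, htgt.resolve_right hwU⟩
  · obtain ⟨hcU, hdU⟩ := hF.2.2 hcd
    rcases hsrc with rfl | ⟨-, hwU⟩ <;> rcases htgt with rfl | hwU' <;> simp_all

lemma pji_mid (hF : Ftriple e c d U) {x y z : E} (hxy : (x, y) ∈ pji e c d U)
    (hyz : (y, z) ∈ pji e c d U) : c = d ∧ y = c :=
  eq_of_source_of_target hF (mem_pji.1 hyz).2.1 (mem_pji.1 hxy).2.2

lemma isClopenIn_pji (he : TransRel e) (hF : Ftriple e c d U) : IsClopenIn e (pji e c d U) := by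
  refine ⟨Set.inter_subset_left, fun x y z hxy hyz => ?_, ?_⟩
  · rw [mem_pji] at hxy hyz ⊢
    exact ⟨he _ _ _ hxy.1 hyz.1, hxy.2.1, hyz.2.2⟩
  · rintro x y z ⟨hxy, hxy'⟩ ⟨hyz, hyz'⟩
    refine ⟨he _ _ _ hxy hyz, fun hxz => ?_⟩
    obtain ⟨-, hx, hz⟩ := mem_pji.1 hxz
    by_cases hyU : y ∈ U
    · exact hxy' (mem_pji.2 ⟨hxy, hx, Or.inr hyU⟩)
    · have hy : y ∈ cce e c d := ⟨rle_trans he (rle_of_source hx) (Or.inl hxy),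
        rle_trans he (Or.inl hyz) (rle_of_target hF hz)⟩
      exact hyz' (mem_pji.2 ⟨hyz, Or.inr ⟨hy, hyU⟩, hz⟩)

lemma mem_pminus {x y : E} :
    (x, y) ∈ pminus e c d U ↔ (x, y) ∈ pji e c d U ∧
      ¬ ((c ≠ d ∧ eqv e x c ∧ eqv e y d) ∨ (c = d ∧ (x, y) = (c, c))) :=
  Iff.rfl

lemma pminus_subset_pji : pminus e c d U ⊆ pji e c d U := fun _ hz => hz.1

lemma eq_of_mem_pji_diff_pminus {u v : E} (h : (u, v) ∈ pji e c d U \ pminus e c d U)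
    (hcd : c = d) : u = c ∧ v = c := by
  subst hcd
  simpa [mem_pminus, h.1] using h.2

lemma eqv_of_mem_pji_diff_pminus {u v : E} (h : (u, v) ∈ pji e c d U \ pminus e c d U)
    (hcd : c ≠ d) : eqv e u c ∧ eqv e v d := by
  simpa [mem_pminus, h.1, hcd] using h.2

lemma rle_of_mem_pji_diff_pminus {u v : E} (h : (u, v) ∈ pji e c d U \ pminus e c d U) :
    rle e u c ∧ rle e d v := by
  by_cases hcd : c = d
  · subst hcd
    obtain ⟨rfl, rfl⟩ := eq_of_mem_pji_diff_pminus h rfl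
    exact ⟨rle_refl _, rle_refl _⟩
  · obtain ⟨huc, hvd⟩ := eqv_of_mem_pji_diff_pminus h hcd
    exact ⟨huc.1, hvd.2⟩

lemma transRel_pminus (he : TransRel e) (hF : Ftriple e c d U) : TransRel (pminus e c d U) := by
  intro x y z hxy hyz
  refine ⟨(isClopenIn_pji he hF).2.1 _ _ _ hxy.1 hyz.1, fun hcross => ?_⟩
  obtain ⟨hcd, hyc⟩ := pji_mid hF hxy.1 hyz.1
  rcases hcross with ⟨hne, -⟩ | ⟨-, hxz⟩
  · exact hne hcd
  · exact hxy.2 (Or.inr ⟨hcd, Prod.ext (Prod.ext_iff.1 hxz).1 hyc⟩)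

lemma transRel_diff_pminus (he : TransRel e) (hF : Ftriple e c d U) :
    TransRel (e \ pminus e c d U) := by
  rintro x y z ⟨hxy, hxy'⟩ ⟨hyz, hyz'⟩
  refine ⟨he _ _ _ hxy hyz, fun hxz => ?_⟩
  obtain ⟨-, hx, hz⟩ := mem_pji.1 hxz.1
  by_cases hxyp : (x, y) ∈ pji e c d U
  · by_cases hcd : c = d
    · obtain ⟨rfl, rfl⟩ := eq_of_mem_pji_diff_pminus ⟨hxyp, hxy'⟩ hcd
      exact hyz' hxz
    · obtain ⟨hxc, hyd⟩ := eqv_of_mem_pji_diff_pminus ⟨hxyp, hxy'⟩ hcd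
      have hzd : eqv e z d := ⟨rle_of_target hF hz, rle_trans he hyd.2 (Or.inl hyz)⟩
      exact hxz.2 (Or.inl ⟨hcd, hxc, hzd⟩)
  by_cases hyzp : (y, z) ∈ pji e c d U
  · by_cases hcd : c = d
    · obtain ⟨rfl, rfl⟩ := eq_of_mem_pji_diff_pminus ⟨hyzp, hyz'⟩ hcd
      exact hxy' hxz
    · obtain ⟨hyc, hzd⟩ := eqv_of_mem_pji_diff_pminus ⟨hyzp, hyz'⟩ hcd
      have hxc : eqv e x c := ⟨rle_trans he (Or.inl hxy) hyc.1, rle_of_source hx⟩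
      exact hxz.2 (Or.inl ⟨hcd, hxc, hzd⟩)
  exact ((isClopenIn_pji he hF).2.2 _ _ _ ⟨hxy, hxyp⟩ ⟨hyz, hyzp⟩).2 hxz.1

lemma isClopenIn_pminus (he : TransRel e) (hF : Ftriple e c d U) :
    IsClopenIn e (pminus e c d U) :=
  ⟨pminus_subset_pji.trans Set.inter_subset_left, transRel_pminus he hF,
    transRel_diff_pminus he hF⟩

lemma mk_mem_pji (hF : Ftriple e c d U) : (c, d) ∈ pji e c d U :=
  mem_pji.2 ⟨hF.1, Or.inl rfl, Or.inl rfl⟩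

lemma pminus_ssubset_pji (hF : Ftriple e c d U) : pminus e c d U ⊂ pji e c d U := by
  refine ⟨pminus_subset_pji, fun h => (h (mk_mem_pji hF)).2 ?_⟩
  by_cases hcd : c = d
  · exact Or.inr ⟨hcd, by rw [hcd]⟩
  · exact Or.inl ⟨hcd, ⟨rle_refl c, rle_refl c⟩, ⟨rle_refl d, rle_refl d⟩⟩

lemma mem_of_mem_tcl_of_mem_pji_diff_pminus (hF : Ftriple e c d U) {s : Set (E × E)}
    (hs : s ⊆ pji e c d U) {u v : E} (huv : (u, v) ∈ tcl s)
    (hcross : (u, v) ∈ pji e c d U \ pminus e c d U) : (u, v) ∈ s := by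
  obtain ⟨w, huw, hwv⟩ := Relation.TransGen.tail'_iff.1 huv
  rcases huw.cases_tail with rfl | ⟨w', -, hw'w⟩
  · exact hwv
  · obtain ⟨hcd, rfl⟩ := pji_mid hF (hs hw'w) (hs hwv)
    obtain ⟨rfl, -⟩ := eq_of_mem_pji_diff_pminus hcross hcd
    exact hwv

lemma pji_subset_of_regClosed (he : TransRel e) (hF : Ftriple e c d U) {x : Set (E × E)}
    (hx : RegClosed e x) (hxp : x ⊆ pji e c d U) {u v : E} (huv : (u, v) ∈ x)
    (hcross : (u, v) ∉ pminus e c d U) : pji e c d U ⊆ x := by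
  have hcross' : (u, v) ∈ pji e c d U \ pminus e c d U := ⟨hxp huv, hcross⟩
  have huv_int : (u, v) ∈ tint e x :=
    mem_of_mem_tcl_of_mem_pji_diff_pminus hF ((tint_subset e x).trans hxp) (hx.2 ▸ huv) hcross'
  obtain ⟨huc, hdv⟩ := rle_of_mem_pji_diff_pminus hcross'
  rintro ⟨s, t⟩ hst
  obtain ⟨hste, hs, ht⟩ := mem_pji.1 hst
  refine tint_subset e x ⟨hste, fun hst' => huv_int.2 ?_⟩
  refine (transRel_tcl _).mem_of_rle_of_mem_of_rle ?_ hst' ?_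
  · by_cases hus : (u, s) ∈ x
    · obtain ⟨hcd, rfl⟩ := pji_mid hF (hxp hus) hst
      exact Or.inr (eq_of_mem_pji_diff_pminus hcross' hcd).1
    · rcases rle_trans he huc (rle_of_source hs) with hus' | rfl
      exacts [Or.inl (subset_tcl _ ⟨hus', hus⟩), rle_refl _]
  · by_cases htv : (t, v) ∈ x
    · obtain ⟨hcd, rfl⟩ := pji_mid hF hst (hxp htv)
      exact Or.inr (eq_of_mem_pji_diff_pminus hcross' hcd).2.symm
    · rcases rle_trans he (rle_of_target hF ht) hdv with htv' | rfl
      exacts [Or.inl (subset_tcl _ ⟨htv', htv⟩), rle_refl _]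

end Triple

section Spatial

variable {E : Type*} {e a : Set (E × E)}

def IsCompletelyJoinIrreducibleIn (e p : Set (E × E)) : Prop :=
  RegClosed e p ∧ ∃ p', RegClosed e p' ∧ p' ⊂ p ∧ ∀ x, RegClosed e x → x ⊂ p → x ⊆ p'

lemma isCompletelyJoinIrreducibleIn_pji (he : TransRel e) {c d : E} {U : Set E}
    (hF : Ftriple e c d U) : IsCompletelyJoinIrreducibleIn e (pji e c d U) := by
  refine ⟨(isClopenIn_pji he hF).regClosed, pminus e c d U, (isClopenIn_pminus he hF).regClosed,
    pminus_ssubset_pji hF, fun x hx hxp => ?_⟩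
  by_contra hns
  obtain ⟨⟨u, v⟩, hux, hum⟩ := Set.not_subset.1 hns
  exact hxp.2 (pji_subset_of_regClosed he hF hx hxp.1 hux hum)

lemma exists_pji_subset {c d : E} (hcd : (c, d) ∈ tint e a) :
    ∃ U : Set E, Ftriple e c d U ∧ pji e c d U ⊆ a := by
  set U : Set E := {x | x ∈ cce e c d ∧ x ≠ c ∧ (c, x) ∈ tint e a}
  have hF : Ftriple e c d U :=
    ⟨hcd.1, fun x hx => hx.1, fun hne => ⟨fun hc => hc.2.1 rfl,
      ⟨⟨Or.inl hcd.1, rle_refl d⟩, Ne.symm hne, hcd⟩⟩⟩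
  refine ⟨U, hF, ?_⟩
  rintro ⟨x, y⟩ hxy
  obtain ⟨hxye, hx, hy⟩ := mem_pji.1 hxy
  have hcy : (c, y) ∈ tint e a := by
    rcases hy with rfl | hy
    exacts [hcd, hy.2.2]
  rcases eq_or_ne x c with rfl | hxc
  · exact tint_subset e a hcy
  obtain ⟨hx, hxU⟩ := hx.resolve_left hxc
  have hcx : (c, x) ∈ tcl (e \ a) :=
    by_contra fun h => hxU ⟨hx, hxc, hx.1.resolve_right (Ne.symm hxc), h⟩
  by_contra hxya
  exact hcy.2 (transRel_tcl _ _ _ _ hcx (subset_tcl _ ⟨hxye, hxya⟩))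

end Spatial

/-- every regular closed subset of `e` is the transitive closure of the union
of the sets `⟨c,d,U⟩` below it; in particular `Reg(e)` is spatial: every element is the
join (transitive closure of the union) of the completely join-irreducible elements below it. -/
theorem regClosed_spatial {E : Type*} (e : Set (E × E)) (he : TransRel e) :
    ∀ a : Set (E × E), RegClosed e a →
      a = tcl (⋃₀ {p | (∃ (c d : E) (U : Set E), Ftriple e c d U ∧ p = pji e c d U) ∧ p ⊆ a}) ∧
      a = tcl (⋃₀ {p | RegClosed e p ∧
        (∃ p', RegClosed e p' ∧ p' ⊂ p ∧ ∀ x, RegClosed e x → x ⊂ p → x ⊆ p') ∧ p ⊆ a}) := by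
  intro a ha
  constructor
  · refine ha.eq_tcl_sUnion (fun p hp => hp.2) ?_
    rintro ⟨c, d⟩ hcd
    obtain ⟨U, hF, hsub⟩ := exists_pji_subset hcd
    exact ⟨_, ⟨⟨c, d, U, hF, rfl⟩, hsub⟩, mk_mem_pji hF⟩
  · refine ha.eq_tcl_sUnion (fun p hp => hp.2.2) ?_
    rintro ⟨c, d⟩ hcd
    obtain ⟨U, hF, hsub⟩ := exists_pji_subset hcd
    obtain ⟨hreg, hlower⟩ := isCompletelyJoinIrreducibleIn_pji he hF
    exact ⟨_, ⟨hreg, hlower, hsub⟩, mk_mem_pji hF⟩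
end

section
/- Let e be a transitive relation on a set E. For every open subset u of e and every pair (a,b) ∈ u, there exists a set U such that (a,b,U) ∈ F(e) and (a,b) ∈ ⟨a,b,U⟩ ⊆ u. In particular, every open subset of e is a set-theoretic union of clopen subsets of e. -/
/-! Given an open `u ∋ (a,b)`, let `U` consist of `b` and the points `x ∈ [a,b]` with
`(x,b) ∈ e \ u`. If some `(x,y) ∈ ⟨a,b,U⟩` left `u`, then, `e \ u` being transitive, so would
`(x,b)`; hence `x ≠ a` and `x ∈ U`, contradicting `x ∈ Uᶜ`. The sets `⟨a,b,U⟩` with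
`U ⊆ [a,b]` are clopen, so `u` is the union of the clopen sets it contains. -/

section

variable {E : Type*} {e : Set (E × E)}

theorem mem_of_mem_of_rle (he : TransRel e) {x y z : E} (hxy : (x, y) ∈ e) (hyz : rle e y z) :
    (x, z) ∈ e := by
  rcases hyz with hyz | rfl
  exacts [he _ _ _ hxy hyz, hxy]

theorem mem_of_rle_of_mem (he : TransRel e) {x y z : E} (hxy : rle e x y) (hyz : (y, z) ∈ e) :
    (x, z) ∈ e := by
  rcases hxy with hxy | rfl
  exacts [he _ _ _ hxy hyz, hyz]

theorem mem_pji_self {a b : E} (U : Set E) (hab : (a, b) ∈ e) : (a, b) ∈ pji e a b U :=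
  ⟨hab, Or.inl rfl, Or.inl rfl⟩

theorem transRel_pji (he : TransRel e) (a b : E) (U : Set E) : TransRel (pji e a b U) := by
  rintro x y z ⟨hxy, hx, -⟩ ⟨hyz, -, hz⟩
  exact ⟨he _ _ _ hxy hyz, hx, hz⟩

theorem transRel_diff_pji (he : TransRel e) {a b : E} {U : Set E} (hU : U ⊆ cce e a b) :
    TransRel (e \ pji e a b U) := by
  rintro x y z ⟨hxy, hxy_out⟩ ⟨hyz, hyz_out⟩
  refine ⟨he _ _ _ hxy hyz, fun ⟨_, hx, hz⟩ => ?_⟩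
  have hay : rle e a y := by
    rcases hx with rfl | ⟨⟨hax, -⟩, -⟩
    exacts [Or.inl hxy, Or.inl (mem_of_rle_of_mem he hax hxy)]
  have hyb : rle e y b := by
    rcases hz with rfl | hzU
    exacts [Or.inl hyz, Or.inl (mem_of_mem_of_rle he hyz (hU hzU).2)]
  have hyU : y ∉ U := fun hyU => hxy_out ⟨hxy, hx, Or.inr hyU⟩
  exact hyz_out ⟨hyz, Or.inr ⟨⟨hay, hyb⟩, hyU⟩, hz⟩

theorem isClopenIn_pji_s13 (he : TransRel e) {a b : E} {U : Set E} (hU : U ⊆ cce e a b) :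
    IsClopenIn e (pji e a b U) :=
  ⟨Set.inter_subset_left, transRel_pji he a b U, transRel_diff_pji he hU⟩

def exitSet (e u : Set (E × E)) (a b : E) : Set E :=
  {x ∈ cce e a b | x = b ∨ (x, b) ∈ e \ u}

theorem ftriple_exitSet {u : Set (E × E)} (hue : u ⊆ e) {a b : E} (hab : (a, b) ∈ u) :
    Ftriple e a b (exitSet e u a b) := by
  refine ⟨hue hab, fun _ hx => hx.1, fun hne => ⟨?_, ?_⟩⟩
  · rintro ⟨-, h | h⟩
    exacts [hne h, h.2 hab]
  · exact ⟨⟨Or.inl (hue hab), Or.inr rfl⟩, Or.inl rfl⟩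

theorem pji_exitSet_subset {u : Set (E × E)} (hu : IsOpenIn e u) {a b : E} (hab : (a, b) ∈ u) :
    pji e a b (exitSet e u a b) ⊆ u := by
  rintro ⟨x, y⟩ ⟨hxy, hx, hy⟩
  by_contra hxy_out
  have hxb : (x, b) ∈ e \ u := by
    rcases hy with rfl | ⟨-, rfl | hyb⟩
    exacts [⟨hxy, hxy_out⟩, ⟨hxy, hxy_out⟩, hu.2 _ _ _ ⟨hxy, hxy_out⟩ hyb]
  rcases hx with rfl | ⟨hx_cce, hx_notin⟩
  exacts [hxb.2 hab, hx_notin ⟨hx_cce, Or.inr hxb⟩]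

end

/-- for every open `u ⊆ e` and every `(a,b) ∈ u` there is `U` with
`(a,b,U) ∈ F(e)` and `(a,b) ∈ ⟨a,b,U⟩ ⊆ u`; in particular every open subset of `e` is a
union of clopen subsets of `e`. -/
theorem open_union_of_pji {E : Type*} (e : Set (E × E)) (he : TransRel e) :
    (∀ u : Set (E × E), IsOpenIn e u → ∀ a b : E, (a, b) ∈ u →
      ∃ U : Set E, Ftriple e a b U ∧ (a, b) ∈ pji e a b U ∧ pji e a b U ⊆ u) ∧
    (∀ u : Set (E × E), IsOpenIn e u → u = ⋃₀ {c | IsClopenIn e c ∧ c ⊆ u}) := by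
  have basis : ∀ u : Set (E × E), IsOpenIn e u → ∀ a b : E, (a, b) ∈ u →
      ∃ U : Set E, Ftriple e a b U ∧ (a, b) ∈ pji e a b U ∧ pji e a b U ⊆ u :=
    fun u hu a b hab => ⟨exitSet e u a b, ftriple_exitSet hu.1 hab,
      mem_pji_self _ (hu.1 hab), pji_exitSet_subset hu hab⟩
  refine ⟨basis, fun u hu => ?_⟩
  refine Set.Subset.antisymm (fun ⟨a, b⟩ hab => ?_) (Set.sUnion_subset fun c hc => hc.2)
  obtain ⟨U, hF, hmem, hsub⟩ := basis u hu a b hab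
  exact ⟨pji e a b U, ⟨isClopenIn_pji_s13 he hF.2.1, hsub⟩, hmem⟩
end
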